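/- arXiv:2211.07526 — 4 statements merged into one kernel-verified Lean document; each statement's English description precedes it below -/
import Mathlib

section
/- Let L = ℤ³ with the bilinear form of U ⊕ [-4] as above, and let φ : L → ℤ/4 × ℤ/4 × ℤ/2 be the map φ(x,y,z) = (x mod 4, y mod 4, z mod 2). Let H be the subgroup generated by (1,-1,0) and (1,1,1). Then for every root r ∈ L (i.e., (r,r) = -2), φ(r) ∈ H; moreover φ(2,0,0) ∉ H. In particular, 2·e₁ = (2,0,0) is not in the subgroup of L generated by the roots. -/
def formU4 : ℤ × ℤ × ℤ → ℤ × ℤ × ℤ → ℤ :=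
  fun a b => a.1 * b.2.1 + b.1 * a.2.1 - 4 * a.2.2 * b.2.2

def redU4 : ℤ × ℤ × ℤ → ZMod 4 × ZMod 4 × ZMod 2 :=
  fun a => ((a.1 : ZMod 4), (a.2.1 : ZMod 4), (a.2.2 : ZMod 2))

def redU4Hom : (ℤ × ℤ × ℤ) →+ (ZMod 4 × ZMod 4 × ZMod 2) where
  toFun := redU4
  map_zero' := rfl
  map_add' := by
    intro a b
    simp only [redU4, Prod.fst_add, Prod.snd_add, Prod.mk_add_mk, Prod.mk.injEq]
    push_cast
    exact ⟨rfl, rfl, rfl⟩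

def KU4 : AddSubgroup (ZMod 4 × ZMod 4 × ZMod 2) where
  carrier := {p | p.1 + p.2.1 = 2 * (p.2.2.val : ZMod 4)}
  zero_mem' := by decide
  add_mem' := by decide
  neg_mem' := by decide

lemma mem_KU4 (p : ZMod 4 × ZMod 4 × ZMod 2) :
    p ∈ KU4 ↔ p.1 + p.2.1 = 2 * (p.2.2.val : ZMod 4) := Iff.rfl

/-- Every root of `U ⊕ [-4]` maps into the subgroup `H` generated by the images of
`(1,-1,0)` and `(1,1,1)`, while `φ(2,0,0) ∉ H`; in particular `2·e₁ = (2,0,0)` is not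
in the subgroup generated by the roots. -/
theorem two_e1_not_in_root_span :
    (∀ r : ℤ × ℤ × ℤ, formU4 r r = -2 →
      redU4 r ∈ AddSubgroup.closure {redU4 (1, -1, 0), redU4 (1, 1, 1)}) ∧
    redU4 (2, 0, 0) ∉ AddSubgroup.closure {redU4 (1, -1, 0), redU4 (1, 1, 1)} ∧
    ((2, 0, 0) : ℤ × ℤ × ℤ) ∉
      AddSubgroup.closure {r : ℤ × ℤ × ℤ | formU4 r r = -2} := by
  have hg1 : redU4 (1, -1, 0) ∈
      AddSubgroup.closure {redU4 (1, -1, 0), redU4 (1, 1, 1)} :=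
    AddSubgroup.subset_closure (by left; rfl)
  have hg2 : redU4 (1, 1, 1) ∈
      AddSubgroup.closure {redU4 (1, -1, 0), redU4 (1, 1, 1)} :=
    AddSubgroup.subset_closure (by right; rfl)
  have part1 : ∀ r : ℤ × ℤ × ℤ, formU4 r r = -2 →
      redU4 r ∈ AddSubgroup.closure {redU4 (1, -1, 0), redU4 (1, 1, 1)} := by
    rintro ⟨x, y, z⟩ hr
    have hform : x * y = 2 * z * z - 1 := by
      simp only [formU4] at hr; linarith
    have hodd : Odd (x * y) := ⟨z * z - 1, by linarith⟩
    rw [Int.odd_mul] at hodd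
    obtain ⟨a, ha⟩ := hodd.1
    obtain ⟨b, hb⟩ := hodd.2
    subst ha hb
    have ht : a + b + 1 = z * z - 2 * (a * b) := by ring_nf at hform ⊢; linarith
    have hz : ((a + b + 1 : ℤ) : ZMod 2) = (z : ZMod 2) := by
      rw [ht]
      push_cast
      have h2 : ∀ c d : ZMod 2, c * c - 2 * d = c := by decide
      exact h2 _ _
    have key : redU4 (2 * a + 1, 2 * b + 1, z) =
        (a - b) • redU4 (1, -1, 0) + (a + b + 1) • redU4 (1, 1, 1) := by
      simp only [redU4, Prod.smul_mk, Prod.mk_add_mk, Prod.mk.injEq, zsmul_eq_mul]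
      refine ⟨?_, ?_, ?_⟩
      · push_cast; ring
      · push_cast; ring
      · push_cast at hz ⊢
        linear_combination -hz
    rw [key]
    exact AddSubgroup.add_mem _ (AddSubgroup.zsmul_mem _ hg1 _) (AddSubgroup.zsmul_mem _ hg2 _)
  have hle : AddSubgroup.closure {redU4 (1, -1, 0), redU4 (1, 1, 1)} ≤ KU4 := by
    rw [AddSubgroup.closure_le]
    rintro p (rfl | rfl) <;> (rw [SetLike.mem_coe, mem_KU4]; decide)
  have hnot : redU4 (2, 0, 0) ∉ AddSubgroup.closure {redU4 (1, -1, 0), redU4 (1, 1, 1)} := by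
    intro hx
    have := (mem_KU4 _).mp (hle hx)
    exact absurd this (by decide)
  refine ⟨part1, hnot, ?_⟩
  intro hmem
  have hle2 : AddSubgroup.closure {r : ℤ × ℤ × ℤ | formU4 r r = -2} ≤
      (AddSubgroup.closure {redU4 (1, -1, 0), redU4 (1, 1, 1)}).comap redU4Hom := by
    rw [AddSubgroup.closure_le]
    intro r hr
    exact part1 r hr
  exact hnot (hle2 hmem)
end

section
/- In the lattice L = ℤ³ with bilinear form of U ⊕ [-4], the sublattice generated by all roots of L has index 4 in L. -/
/-- The linear functional `(x,y,z) ↦ x + y + 2z` into `ZMod 4`. -/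
def psiU4 : (ℤ × ℤ × ℤ) →ₗ[ℤ] ZMod 4 where
  toFun v := (v.1 : ZMod 4) + (v.2.1 : ZMod 4) + 2 * (v.2.2 : ZMod 4)
  map_add' a b := by
    simp only [Prod.fst_add, Prod.snd_add]
    push_cast; ring
  map_smul' m v := by
    simp only [Prod.smul_fst, Prod.smul_snd, smul_eq_mul, RingHom.id_apply, zsmul_eq_mul, Prod.fst_mul, Prod.snd_mul, Prod.fst_intCast, Prod.snd_intCast]
    push_cast
    ring

lemma zmod8_key : ∀ a b c : ZMod 8,
    a * b + a * b - 4 * c * c = -2 →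
    (ZMod.castHom (show (4:ℕ) ∣ 8 by norm_num) (ZMod 4)) a
      + (ZMod.castHom (show (4:ℕ) ∣ 8 by norm_num) (ZMod 4)) b
      + 2 * (ZMod.castHom (show (4:ℕ) ∣ 8 by norm_num) (ZMod 4)) c = 0 := by
  decide

lemma span_eq_ker :
    Submodule.span ℤ {r : ℤ × ℤ × ℤ | formU4 r r = -2} = LinearMap.ker psiU4 := by
  apply le_antisymm
  · rw [Submodule.span_le]
    rintro ⟨x, y, z⟩ hr
    simp only [Set.mem_setOf_eq, formU4] at hr
    simp only [SetLike.mem_coe, LinearMap.mem_ker, psiU4, LinearMap.coe_mk, AddHom.coe_mk]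
    have h8 : (x : ZMod 8) * (y : ZMod 8) + (x : ZMod 8) * (y : ZMod 8)
        - 4 * (z : ZMod 8) * (z : ZMod 8) = -2 := by
      have := congrArg (fun t : ℤ => (t : ZMod 8)) hr
      push_cast at this
      linear_combination this
    have := zmod8_key _ _ _ h8
    rwa [map_intCast, map_intCast, map_intCast] at this
  · rintro ⟨x, y, z⟩ hv
    simp only [LinearMap.mem_ker, psiU4, LinearMap.coe_mk, AddHom.coe_mk] at hv
    have hdvd : (4 : ℤ) ∣ x + y + 2 * z := by
      have : ((x + y + 2 * z : ℤ) : ZMod 4) = 0 := by push_cast; linear_combination hv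
      exact_mod_cast (ZMod.intCast_zmod_eq_zero_iff_dvd _ 4).mp this
    obtain ⟨k, hk⟩ := hdvd
    have he1 : ((1, -1, 0) : ℤ × ℤ × ℤ) ∈ {r : ℤ × ℤ × ℤ | formU4 r r = -2} := by
      simp [formU4]
    have he3 : ((1, 1, 1) : ℤ × ℤ × ℤ) ∈ {r : ℤ × ℤ × ℤ | formU4 r r = -2} := by
      simp [formU4]
    have he4 : ((-1, -1, 1) : ℤ × ℤ × ℤ) ∈ {r : ℤ × ℤ × ℤ | formU4 r r = -2} := by
      simp [formU4]
    have hrepr : ((x, y, z) : ℤ × ℤ × ℤ)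
        = (x + z - 2 * k) • ((1, -1, 0) : ℤ × ℤ × ℤ)
          + k • ((1, 1, 1) : ℤ × ℤ × ℤ) + (z - k) • ((-1, -1, 1) : ℤ × ℤ × ℤ) := by
      simp only [Prod.smul_mk, smul_eq_mul, Prod.mk_add_mk, Prod.mk.injEq]
      refine ⟨by ring, by linarith [hk], by ring⟩
    rw [hrepr]
    exact Submodule.add_mem _
      (Submodule.add_mem _
        (Submodule.smul_mem _ _ (Submodule.subset_span he1))
        (Submodule.smul_mem _ _ (Submodule.subset_span he3)))
      (Submodule.smul_mem _ _ (Submodule.subset_span he4))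

/-- In `U ⊕ [-4]`, the sublattice generated by all the roots has index `4`. -/
theorem root_sublattice_index_four :
    (Submodule.span ℤ {r : ℤ × ℤ × ℤ | formU4 r r = -2}).toAddSubgroup.index = 4 := by
  rw [span_eq_ker]
  have hker : (LinearMap.ker psiU4).toAddSubgroup = (psiU4.toAddMonoidHom).ker := rfl
  rw [hker, AddSubgroup.index_ker]
  have hsurj : Function.Surjective psiU4.toAddMonoidHom := by
    intro c
    refine ⟨(0, (c.val : ℤ), 0), ?_⟩
    simp [psiU4, LinearMap.toAddMonoidHom, ZMod.natCast_val, ZMod.intCast_cast, ZMod.intCast_zmod_cast]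
  rw [AddMonoidHom.range_eq_top.mpr hsurj, AddSubgroup.card_top, Nat.card_zmod]
end

section
/- Let L be an even lattice and e ∈ L a primitive isotropic element (e ≠ 0, (e,e) = 0, and e is not a nontrivial integer multiple of another lattice element). Suppose {(e,x) : x ∈ L} = l·ℤ with l > 1. Then the ℤ-module L' = L + ℤ·(e/l) ⊆ L ⊗ ℚ, with the ℚ-extension of the bilinear form, is an even lattice (the form takes integer values on L' and all self-intersections are even), and it is an overlattice of L containing an element e' = e/l with (e', y) = 1 for some y ∈ L'. -/
/-- Let `L` be an even lattice (inside `V = L ⊗ ℚ`), `e ∈ L` a primitive isotropic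
element whose divisibility is `l > 1` (i.e. `{(e,x) : x ∈ L} = lℤ`).  Then
`L' = L + ℤ·(e/l)` is an even overlattice of `L` containing the primitive isotropic
element `e' = e/l` which pairs to `1` with some `y ∈ L'`.  (Lemma 2.2 of the paper.) -/
theorem overlattice_with_section (V : Type*) [AddCommGroup V] [Module ℚ V]
    (B : V →ₗ[ℚ] V →ₗ[ℚ] ℚ) (hsymm : ∀ x y : V, B x y = B y x)
    (L : Submodule ℤ V)
    (hint : ∀ x ∈ L, ∀ y ∈ L, ∃ n : ℤ, B x y = (n : ℚ))
    (heven : ∀ x ∈ L, ∃ n : ℤ, B x x = 2 * (n : ℚ))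
    (e : V) (heL : e ∈ L) (he0 : e ≠ 0) (hiso : B e e = 0)
    (hprim : ∀ m : ℤ, 1 < m → ∀ x ∈ L, e ≠ m • x)
    (l : ℤ) (hl : 1 < l)
    (hdiv : ∀ x ∈ L, ∃ n : ℤ, B e x = (n : ℚ) * (l : ℚ))
    (hdiv' : ∃ x ∈ L, B e x = (l : ℚ)) :
    L ≤ L ⊔ Submodule.span ℤ {(l : ℚ)⁻¹ • e} ∧
    (∀ x ∈ L ⊔ Submodule.span ℤ {(l : ℚ)⁻¹ • e},
      ∀ y ∈ L ⊔ Submodule.span ℤ {(l : ℚ)⁻¹ • e}, ∃ n : ℤ, B x y = (n : ℚ)) ∧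
    (∀ x ∈ L ⊔ Submodule.span ℤ {(l : ℚ)⁻¹ • e}, ∃ n : ℤ, B x x = 2 * (n : ℚ)) ∧
    B ((l : ℚ)⁻¹ • e) ((l : ℚ)⁻¹ • e) = 0 ∧
    (∃ y ∈ L ⊔ Submodule.span ℤ {(l : ℚ)⁻¹ • e}, B ((l : ℚ)⁻¹ • e) y = 1) := by

  set f : V := (l : ℚ)⁻¹ • e with hf_def
  have hl0 : (l : ℚ) ≠ 0 := by
    exact_mod_cast (by omega : l ≠ 0)
  -- pairing of f with lattice elements is integral
  have hfL : ∀ x ∈ L, ∃ n : ℤ, B f x = (n : ℚ) := by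
    intro x hx
    obtain ⟨n, hn⟩ := hdiv x hx
    refine ⟨n, ?_⟩
    have : B f x = (l : ℚ)⁻¹ * B e x := by
      simp [hf_def, map_smul]
    rw [this, hn]
    field_simp
  have hff : B f f = 0 := by
    have : B f f = (l : ℚ)⁻¹ * ((l : ℚ)⁻¹ * B e e) := by
      simp [hf_def, map_smul, smul_eq_mul]
    rw [this, hiso]; ring
  -- decomposition of elements of L'
  have hdecomp : ∀ z ∈ L ⊔ Submodule.span ℤ {f}, ∃ x ∈ L, ∃ m : ℤ, z = x + m • f := by
    intro z hz
    rw [Submodule.mem_sup] at hz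
    obtain ⟨x, hx, y, hy, rfl⟩ := hz
    rw [Submodule.mem_span_singleton] at hy
    obtain ⟨m, rfl⟩ := hy
    exact ⟨x, hx, m, rfl⟩
  have hBf : ∀ (m : ℤ) (x : V), B x (m • f) = (m : ℚ) * B x f := by
    intro m x
    rw [map_zsmul]; simp
  have hBf' : ∀ (m : ℤ) (x : V), B (m • f) x = (m : ℚ) * B f x := by
    intro m x
    rw [map_zsmul]; simp
  refine ⟨le_sup_left, ?_, ?_, hff, ?_⟩
  · intro z hz w hw
    obtain ⟨x, hx, m, rfl⟩ := hdecomp z hz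
    obtain ⟨y, hy, n, rfl⟩ := hdecomp w hw
    obtain ⟨a, ha⟩ := hint x hx y hy
    obtain ⟨b, hb⟩ := hfL y hy
    obtain ⟨c, hc⟩ := hfL x hx
    refine ⟨a + m * b + n * c, ?_⟩
    have hxf : B x f = (c : ℚ) := by rw [hsymm x f]; exact hc
    simp only [map_add, LinearMap.add_apply, map_zsmul, LinearMap.smul_apply, zsmul_eq_mul]
    rw [ha, hb, hxf, hff]
    push_cast
    ring
  · intro z hz
    obtain ⟨x, hx, m, rfl⟩ := hdecomp z hz
    obtain ⟨a, ha⟩ := heven x hx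
    obtain ⟨c, hc⟩ := hfL x hx
    refine ⟨a + m * c, ?_⟩
    have hxf : B x f = (c : ℚ) := by rw [hsymm x f]; exact hc
    simp only [map_add, LinearMap.add_apply, map_zsmul, LinearMap.smul_apply, zsmul_eq_mul]
    rw [ha, hc, hxf, hff]
    push_cast
    ring
  · obtain ⟨y, hy, hy1⟩ := hdiv'
    refine ⟨y, Submodule.mem_sup_left hy, ?_⟩
    have : B f y = (l : ℚ)⁻¹ * B e y := by simp [hf_def, map_smul]
    rw [this, hy1]
    field_simp
end

section
/- Let G be a finite abelian group with a quadratic form q : G → ℚ/2ℤ (satisfying q(nx) = n²q(x) and with associated bilinear form b(x,y) = (q(x+y) - q(x) - q(y))/2 well-defined in ℚ/ℤ). If p is an odd prime and |G| is divisible by p³ with G having a subgroup of order p³, then there exists a nonzero element x ∈ G of order p with q(x) = 0. -/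
/-- The homomorphism `ℚ/ℤ → ℚ/2ℤ` induced by multiplication by `2`. -/
noncomputable def mulTwoHom :
    (ℚ ⧸ AddSubgroup.zmultiples (1 : ℚ)) →+ (ℚ ⧸ AddSubgroup.zmultiples (2 : ℚ)) :=
  QuotientAddGroup.map _ _ (AddMonoidHom.mk' (fun x : ℚ => 2 * x) (by intro a b; ring))
    (by
      intro x hx
      obtain ⟨n, hn⟩ := AddSubgroup.mem_zmultiples_iff.mp hx
      refine AddSubgroup.mem_comap.mpr (AddSubgroup.mem_zmultiples_iff.mpr ⟨n, ?_⟩)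
      simp only [AddMonoidHom.mk'_apply, ← hn, zsmul_eq_mul]
      ring)

lemma aux_card_le_card_ker_mul {K M : Type*} [AddCommGroup K] [Finite K] [AddCommGroup M]
    (f : K →+ M) (T : AddSubgroup M) [Finite T] (hf : ∀ k, f k ∈ T) :
    Nat.card K ≤ Nat.card f.ker * Nat.card T := by
  have h1 : Nat.card K = Nat.card (K ⧸ f.ker) * Nat.card f.ker :=
    AddSubgroup.card_eq_card_quotient_mul_card_addSubgroup f.ker
  have h2 : Nat.card (K ⧸ f.ker) = Nat.card f.range :=
    Nat.card_congr (QuotientAddGroup.quotientKerEquivRange f).toEquiv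
  have hle : f.range ≤ T := by rintro m ⟨k, rfl⟩; exact hf k
  have h3 : Nat.card f.range ≤ Nat.card T :=
    Nat.card_le_card_of_injective (AddSubgroup.inclusion hle)
      (AddSubgroup.inclusion_injective hle)
  calc Nat.card K = Nat.card (K ⧸ f.ker) * Nat.card f.ker := h1
    _ = Nat.card f.ker * Nat.card (K ⧸ f.ker) := Nat.mul_comm _ _
    _ ≤ Nat.card f.ker * Nat.card T := by
        rw [h2] at *; exact Nat.mul_le_mul_left _ h3

noncomputable def mk1 : ℚ →+ (ℚ ⧸ AddSubgroup.zmultiples (1 : ℚ)) :=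
  QuotientAddGroup.mk' _

lemma phi_setup (p : ℕ) (hp : p.Prime) :
    ∃ φ : ZMod p →+ (ℚ ⧸ AddSubgroup.zmultiples (1 : ℚ)),
      Function.Injective φ ∧ ∀ t, p • t = 0 → ∃ a, t = φ a := by
  have hp0 : (p : ℚ) ≠ 0 := Nat.cast_ne_zero.mpr hp.ne_zero
  have hψ : (zmultiplesHom _ (mk1 ((p : ℚ)⁻¹))) (p : ℤ) = 0 := by
    show (p : ℤ) • mk1 ((p : ℚ)⁻¹) = 0
    rw [← map_zsmul]
    have : (p : ℤ) • ((p : ℚ)⁻¹) = 1 := by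
      rw [zsmul_eq_mul]; push_cast; field_simp
    rw [this]
    exact (QuotientAddGroup.eq_zero_iff _).mpr (AddSubgroup.mem_zmultiples _)
  set φ : ZMod p →+ (ℚ ⧸ AddSubgroup.zmultiples (1 : ℚ)) :=
    ZMod.lift p ⟨zmultiplesHom _ (mk1 ((p : ℚ)⁻¹)), hψ⟩ with hφ
  have φcast : ∀ m : ℤ, φ (m : ZMod p) = mk1 (m * (p : ℚ)⁻¹) := by
    intro m
    rw [hφ, ZMod.lift_coe]
    show (m : ℤ) • mk1 ((p : ℚ)⁻¹) = _
    rw [← map_zsmul, zsmul_eq_mul]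
  refine ⟨φ, ?_, ?_⟩
  · rw [injective_iff_map_eq_zero]
    intro a ha
    have hcast : a = ((a.cast : ℤ) : ZMod p) := (ZMod.intCast_zmod_cast a).symm
    rw [hcast] at ha ⊢
    rw [φcast] at ha
    have := (QuotientAddGroup.eq_zero_iff _).mp ha
    obtain ⟨k, hk⟩ := AddSubgroup.mem_zmultiples_iff.mp this
    rw [zsmul_eq_mul, mul_one] at hk
    have hdvd : (p : ℤ) ∣ a.cast := by
      refine ⟨k, ?_⟩
      have : ((a.cast : ℤ) : ℚ) = ((p : ℤ) * k : ℤ) := by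
        push_cast
        field_simp at hk ⊢
        linarith [hk]
      exact_mod_cast this
    exact (ZMod.intCast_zmod_eq_zero_iff_dvd _ _).mpr hdvd
  · intro t ht
    obtain ⟨r, rfl⟩ := QuotientAddGroup.mk'_surjective (AddSubgroup.zmultiples (1:ℚ)) t
    have h0 : mk1 ((p : ℚ) * r) = 0 := by
      rw [← ht]
      show _ = p • mk1 r
      rw [← map_nsmul]
      congr 1
    obtain ⟨k, hk⟩ :=
      AddSubgroup.mem_zmultiples_iff.mp ((QuotientAddGroup.eq_zero_iff _).mp h0)
    rw [zsmul_eq_mul, mul_one] at hk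
    refine ⟨(k : ZMod p), ?_⟩
    rw [φcast]
    show mk1 r = _
    congr 1
    field_simp
    linarith [hk]

/-- Let `(G, q)` be a finite quadratic form with values in `ℚ/2ℤ`, with associated
`ℚ/ℤ`-valued bilinear form `b` (so `2·b(x,y) = q(x+y) - q(x) - q(y)`).  If `p` is an odd
prime such that `p³` divides `|G|` and `G` has a subgroup of order `p³`, then there is a
nonzero isotropic element of order `p`: some `x ≠ 0` with `addOrderOf x = p` and
`q(x) = 0`.  (The counting step of Lemma 4.6(1).) -/
theorem exists_isotropic_of_order_p (G : Type*) [AddCommGroup G] [Finite G]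
    (q : G → ℚ ⧸ AddSubgroup.zmultiples (2 : ℚ))
    (hq : ∀ (n : ℤ) (x : G), q (n • x) = (n ^ 2) • q x)
    (b : G → G → ℚ ⧸ AddSubgroup.zmultiples (1 : ℚ))
    (hb_symm : ∀ x y, b x y = b y x)
    (hb_add : ∀ x y z, b (x + y) z = b x z + b y z)
    (hbq : ∀ x y, mulTwoHom (b x y) = q (x + y) - q x - q y)
    (p : ℕ) (hp : p.Prime) (hodd : Odd p)
    (hdvd : p ^ 3 ∣ Nat.card G)
    (hsub : ∃ H : AddSubgroup G, Nat.card H = p ^ 3) :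
    ∃ x : G, x ≠ 0 ∧ addOrderOf x = p ∧ q x = 0 := by
  obtain ⟨H, hH⟩ := hsub
  haveI : Fact p.Prime := ⟨hp⟩
  haveI : NeZero p := ⟨hp.ne_zero⟩
  have hp2 : 2 ≤ p := hp.two_le
  have hq0 : q 0 = 0 := by
    have := hq 0 0; simpa using this
  have hb_zsmul : ∀ (n : ℤ) (x y : G), b (n • x) y = n • b x y := by
    intro n x y
    exact map_zsmul (AddMonoidHom.mk' (fun w => b w y) (fun a c => hb_add a c y)) n x
  have hb_add2 : ∀ x y z : G, b x (y + z) = b x y + b x z := by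
    intro x y z
    rw [hb_symm, hb_add, hb_symm y x, hb_symm z x]
  have hb_zsmul2 : ∀ (n : ℤ) (x y : G), b x (n • y) = n • b x y := by
    intro n x y
    rw [hb_symm, hb_zsmul, hb_symm]
  have hb0 : ∀ y : G, b 0 y = 0 := by
    intro y
    have := hb_zsmul 0 0 y
    simpa using this
  have hbp : ∀ x y : G, p • x = 0 → p • (b x y) = 0 := by
    intro x y hx
    rw [← natCast_zsmul, ← hb_zsmul, natCast_zsmul, hx, hb0]
  have lemA : ∀ x : G, p • x = 0 → b x x = 0 → q x = 0 := by
    intro x hpx hbx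
    have h2 : (2 : ℤ) • q x = 0 := by
      have h := hbq x x
      rw [hbx, map_zero, ← two_zsmul, hq 2 x] at h
      have he : (2 : ℤ) • q x = (2:ℤ) ^ 2 • q x - q x - q x := by norm_num; abel
      rw [he, ← h]
    have hpq : ((p : ℤ) ^ 2) • q x = 0 := by
      have h := hq (p : ℤ) x
      rw [natCast_zsmul, hpx, hq0] at h
      exact h.symm
    have hcop : IsCoprime (2 : ℤ) ((p : ℤ) ^ 2) := by
      have h1 : Nat.Coprime 2 p := (Nat.prime_two.coprime_iff_not_dvd).mpr
        (fun hdv => (Nat.not_even_iff_odd.mpr hodd) (even_iff_two_dvd.mpr hdv))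
      exact (Nat.isCoprime_iff_coprime.mpr h1).pow_right
    obtain ⟨u, v, huv⟩ := hcop
    calc q x = (1 : ℤ) • q x := (one_zsmul _).symm
      _ = (u * 2 + v * (p : ℤ) ^ 2) • q x := by rw [huv]
      _ = u • ((2:ℤ) • q x) + v • (((p : ℤ) ^ 2) • q x) := by
          rw [add_zsmul, mul_zsmul, mul_zsmul]
      _ = 0 := by rw [h2, hpq, smul_zero, smul_zero, add_zero]
  have lemOrd : ∀ x : G, x ≠ 0 → p • x = 0 → addOrderOf x = p := by
    intro x hx0 hpx
    exact addOrderOf_eq_prime hpx hx0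
  by_cases hcase : ∃ y : G, addOrderOf y = p ^ 2
  · obtain ⟨y, hy⟩ := hcase
    have hp2y : (p ^ 2) • y = 0 := by rw [← hy]; exact addOrderOf_nsmul_eq_zero y
    have hpx : p • (p • y) = 0 := by
      rw [smul_smul, ← pow_two, hp2y]
    have hx0 : p • y ≠ 0 := by
      intro h
      have hdv : addOrderOf y ∣ p := addOrderOf_dvd_of_nsmul_eq_zero h
      rw [hy] at hdv
      have := Nat.le_of_dvd hp.pos hdv
      nlinarith
    have hbxx : b (p • y) (p • y) = 0 := by
      rw [← natCast_zsmul y p, hb_zsmul, hb_zsmul2, smul_smul, ← hb_zsmul]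
      have h0 : ((p : ℤ) * (p : ℤ)) • y = 0 := by
        rw [← Nat.cast_mul, natCast_zsmul, ← pow_two, hp2y]
      rw [h0, hb0]
    exact ⟨p • y, hx0, lemOrd _ hx0 hpx, lemA _ hpx hbxx⟩
  · push_neg at hcase
    have helem : ∀ g ∈ H, p • g = 0 := by
      intro g hg
      have hord : addOrderOf g ∣ p ^ 3 := by
        have h1 : addOrderOf (⟨g, hg⟩ : H) ∣ Nat.card H := addOrderOf_dvd_natCard _
        rwa [hH, AddSubgroup.addOrderOf_mk] at h1
      obtain ⟨k, hk3, hk⟩ := (Nat.dvd_prime_pow hp).mp hord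
      rcases Nat.lt_or_ge k 2 with hk2 | hk2
      · have hdvd1 : addOrderOf g ∣ p := by
          rw [hk]
          calc p ^ k ∣ p ^ 1 := pow_dvd_pow p (by omega)
            _ = p := pow_one p
        exact addOrderOf_dvd_iff_nsmul_eq_zero.mp hdvd1
      · exfalso
        apply hcase (p ^ (k - 2) • g)
        have h20 : (p ^ 2) • (p ^ (k-2) • g) = 0 := by
          rw [smul_smul, ← pow_add]
          have he : 2 + (k - 2) = k := by omega
          rw [he, ← hk]
          exact addOrderOf_nsmul_eq_zero g
        have h10 : ¬ (p • (p ^ (k-2) • g) = 0) := by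
          rw [smul_smul]
          intro h
          have hd : addOrderOf g ∣ p * p ^ (k - 2) := addOrderOf_dvd_of_nsmul_eq_zero h
          rw [hk, ← pow_succ'] at hd
          have hle := (Nat.pow_dvd_pow_iff_le_right hp.one_lt).mp hd
          omega
        have hdvd2 : addOrderOf (p ^ (k-2) • g) ∣ p ^ 2 := addOrderOf_dvd_of_nsmul_eq_zero h20
        obtain ⟨m, hm2, hm⟩ := (Nat.dvd_prime_pow hp).mp hdvd2
        rcases Nat.lt_or_ge m 2 with hm1 | hm1
        · exfalso
          apply h10
          apply addOrderOf_dvd_iff_nsmul_eq_zero.mp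
          rw [hm]
          calc p ^ m ∣ p ^ 1 := pow_dvd_pow p (by omega)
            _ = p := pow_one p
        · rw [hm]
          congr 1
          omega
    obtain ⟨φ, φinj, φmem⟩ := phi_setup p hp
    haveI : Finite φ.range := Finite.of_surjective _ φ.rangeRestrict_surjective
    have hφcard : Nat.card φ.range ≤ p := by
      have h := Nat.card_le_card_of_surjective _ φ.rangeRestrict_surjective
      rwa [Nat.card_zmod] at h
    have hrange : ∀ w v : G, w ∈ H → b w v ∈ φ.range := by
      intro w v hw
      obtain ⟨a, ha⟩ := φmem (b w v) (hbp w v (helem w hw))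
      exact ⟨a, ha.symm⟩
    suffices hsuff : ∃ w : G, w ∈ H ∧ w ≠ 0 ∧ b w w = 0 by
      obtain ⟨w, hwH, hw0, hbw⟩ := hsuff
      exact ⟨w, hw0, lemOrd w hw0 (helem w hwH), lemA w (helem w hwH) hbw⟩
    haveI : Nontrivial H := by
      apply Finite.one_lt_card_iff_nontrivial.mp
      rw [hH]
      exact Nat.one_lt_pow (by norm_num) hp.one_lt
    obtain ⟨x0, hx00⟩ := exists_ne (0 : H)
    set x : G := (x0 : G) with hxdef
    have hxH : x ∈ H := x0.2
    have hx0 : x ≠ 0 := by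
      intro h
      exact hx00 (by rwa [← ZeroMemClass.coe_eq_zero (S' := H)])
    by_cases hbxx : b x x = 0
    · exact ⟨x, hxH, hx0, hbxx⟩
    set f₁ : H →+ (ℚ ⧸ AddSubgroup.zmultiples (1:ℚ)) :=
      AddMonoidHom.mk' (fun h : H => b x (h : G)) (fun a c => by
        push_cast
        exact hb_add2 x a c) with hf₁def
    have hker1 : p ^ 3 ≤ Nat.card f₁.ker * p := by
      have h1 := aux_card_le_card_ker_mul f₁ φ.range (fun k => hrange x k hxH)
      rw [hH] at h1
      exact h1.trans (Nat.mul_le_mul_left _ hφcard)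
    have hker1' : p ^ 2 ≤ Nat.card f₁.ker := by
      have h2 : p ^ 2 * p ≤ Nat.card f₁.ker * p := by rw [← pow_succ]; exact hker1
      exact Nat.le_of_mul_le_mul_right h2 hp.pos
    haveI : Nontrivial f₁.ker := by
      apply Finite.one_lt_card_iff_nontrivial.mp
      have : 1 < p ^ 2 := Nat.one_lt_pow (by norm_num) hp.one_lt
      omega
    obtain ⟨y0, hy00⟩ := exists_ne (0 : f₁.ker)
    set y : G := ((y0 : H) : G) with hydef
    have hyH : y ∈ H := (y0 : H).2
    have hy0 : y ≠ 0 := by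
      intro h
      apply hy00
      have h1 : (y0 : H) = 0 := by rwa [← ZeroMemClass.coe_eq_zero (S' := H)]
      rwa [← ZeroMemClass.coe_eq_zero (S' := f₁.ker)]
    have hxy : b x y = 0 := by
      have h1 := AddMonoidHom.mem_ker.mp y0.2
      simpa [hf₁def] using h1
    by_cases hbyy : b y y = 0
    · exact ⟨y, hyH, hy0, hbyy⟩
    set f₂ : f₁.ker →+ (ℚ ⧸ AddSubgroup.zmultiples (1:ℚ)) :=
      AddMonoidHom.mk' (fun k : f₁.ker => b y ((k : H) : G)) (fun a c => by
        push_cast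
        exact hb_add2 y _ _) with hf₂def
    have hker2 : Nat.card f₁.ker ≤ Nat.card f₂.ker * p := by
      have h1 := aux_card_le_card_ker_mul f₂ φ.range (fun k => hrange y _ hyH)
      exact h1.trans (Nat.mul_le_mul_left _ hφcard)
    have hker2' : p ≤ Nat.card f₂.ker := by
      have h1 : p * p ≤ Nat.card f₂.ker * p := by
        calc p * p = p ^ 2 := (pow_two p).symm
          _ ≤ Nat.card f₁.ker := hker1'
          _ ≤ Nat.card f₂.ker * p := hker2
      exact Nat.le_of_mul_le_mul_right h1 hp.pos
    haveI : Nontrivial f₂.ker := by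
      apply Finite.one_lt_card_iff_nontrivial.mp
      omega
    obtain ⟨z0, hz00⟩ := exists_ne (0 : f₂.ker)
    set z : G := (((z0 : f₁.ker) : H) : G) with hzdef
    have hzH : z ∈ H := ((z0 : f₁.ker) : H).2
    have hz0 : z ≠ 0 := by
      intro h
      apply hz00
      have h1 : ((z0 : f₁.ker) : H) = 0 := by rwa [← ZeroMemClass.coe_eq_zero (S' := H)]
      have h2 : (z0 : f₁.ker) = 0 := by rwa [← ZeroMemClass.coe_eq_zero (S' := f₁.ker)]
      rwa [← ZeroMemClass.coe_eq_zero (S' := f₂.ker)]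
    have hxz : b x z = 0 := by
      have h1 := AddMonoidHom.mem_ker.mp (z0 : f₁.ker).2
      simpa [hf₁def] using h1
    have hyz : b y z = 0 := by
      have h1 := AddMonoidHom.mem_ker.mp z0.2
      simpa [hf₂def] using h1
    by_cases hbzz : b z z = 0
    · exact ⟨z, hzH, hz0, hbzz⟩
    -- extract ZMod p values
    obtain ⟨abar, ha⟩ := hrange x x hxH
    obtain ⟨bbar, hbb⟩ := hrange y y hyH
    obtain ⟨cbar, hc⟩ := hrange z z hzH
    have ha0 : abar ≠ 0 := by
      intro h; apply hbxx; rw [← ha, h, map_zero]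
    have hb0' : bbar ≠ 0 := by
      intro h; apply hbyy; rw [← hbb, h, map_zero]
    -- solve a s² + c + b t² = 0 over ZMod p
    have hcardmod : Fintype.card (ZMod p) % 2 = 1 := by
      rw [ZMod.card]; exact Nat.odd_iff.mp hodd
    obtain ⟨s, t, hst⟩ := FiniteField.exists_root_sum_quadratic
      (f := Polynomial.C abar * Polynomial.X ^ 2 + Polynomial.C 0 * Polynomial.X
        + Polynomial.C cbar)
      (g := Polynomial.C bbar * Polynomial.X ^ 2 + Polynomial.C 0 * Polynomial.X
        + Polynomial.C 0)
      (Polynomial.degree_quadratic ha0) (Polynomial.degree_quadratic hb0') hcardmod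
    simp only [Polynomial.eval_add, Polynomial.eval_mul, Polynomial.eval_pow,
      Polynomial.eval_C, Polynomial.eval_X, zero_mul, add_zero, zero_add] at hst
    set σ : ℤ := (s.cast : ℤ) with hσdef
    set τ : ℤ := (t.cast : ℤ) with hτdef
    have hσ : ((σ : ℤ) : ZMod p) = s := ZMod.intCast_zmod_cast s
    have hτ : ((τ : ℤ) : ZMod p) = t := ZMod.intCast_zmod_cast t
    have hyx : b y x = 0 := by rw [hb_symm]; exact hxy
    have hzx : b z x = 0 := by rw [hb_symm]; exact hxz
    have hzy : b z y = 0 := by rw [hb_symm]; exact hyz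
    set w : G := σ • x + τ • y + z with hwdef
    have hexp : ∀ u : G, b u w = σ • b u x + τ • b u y + b u z := by
      intro u
      rw [hwdef, hb_add2, hb_add2, hb_zsmul2, hb_zsmul2]
    have hwx : b w x = σ • b x x := by
      rw [hb_symm, hexp x, hxy, hxz, smul_zero, add_zero, add_zero]
    have hwy : b w y = τ • b y y := by
      rw [hb_symm, hexp y, hyx, hyz, smul_zero, add_zero, zero_add]
    have hwz : b w z = b z z := by
      rw [hb_symm, hexp z, hzx, hzy, smul_zero, smul_zero, zero_add, zero_add]
    have hbww : b w w = 0 := by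
      rw [hexp w, hwx, hwy, hwz, ← ha, ← hbb, ← hc,
        ← map_zsmul φ, ← map_zsmul φ, ← map_zsmul φ, ← map_zsmul φ,
        ← map_add, ← map_add]
      have harg : σ • σ • abar + τ • τ • bbar + cbar = 0 := by
        rw [zsmul_eq_mul, zsmul_eq_mul, zsmul_eq_mul, zsmul_eq_mul, hσ, hτ]
        linear_combination hst
      rw [harg, map_zero]
    have hw0 : w ≠ 0 := by
      intro h
      have h1 : b x w = 0 := by rw [h, hb_symm, hb0]
      rw [hexp x, hxy, hxz, smul_zero, add_zero, add_zero, ← ha, ← map_zsmul] at h1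
      have hs : σ • abar = 0 := φinj (by rw [h1, map_zero])
      rw [zsmul_eq_mul, hσ] at hs
      have hs0 : s = 0 := by
        rcases mul_eq_zero.mp hs with h' | h'
        · exact h'
        · exact absurd h' ha0
      have h2 : b y w = 0 := by rw [h, hb_symm, hb0]
      rw [hexp y, hyx, hyz, smul_zero, add_zero, zero_add, ← hbb, ← map_zsmul] at h2
      have ht : τ • bbar = 0 := φinj (by rw [h2, map_zero])
      rw [zsmul_eq_mul, hτ] at ht
      have ht0 : t = 0 := by
        rcases mul_eq_zero.mp ht with h' | h'
        · exact h'
        · exact absurd h' hb0'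
      have hσ0 : σ = 0 := by rw [hσdef, hs0, ZMod.cast_zero]
      have hτ0 : τ = 0 := by rw [hτdef, ht0, ZMod.cast_zero]
      apply hz0
      rw [hwdef, hσ0, hτ0, zero_zsmul, zero_zsmul, zero_add, zero_add] at h
      exact h
    have hwH : w ∈ H :=
      H.add_mem (H.add_mem (H.zsmul_mem hxH σ) (H.zsmul_mem hyH τ)) hzH
    exact ⟨w, hwH, hw0, hbww⟩
end
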